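/- Let T = (t_1,...,t_n) be a sequence of transpositions in S_d such that ⟨t_1,...,t_n⟩ has a unique nontrivial orbit Σ, and suppose T is not minimal, i.e. s = t_1⋯t_n is not a cycle of length n+1. Then for every a ∈ Σ there exists a braid-equivalent sequence (t'_1,...,t'_n) such that t'_{n−1} = t'_n = (ab) for some b ∈ Σ with b ≠ a. -/

import Mathlib

/-- One elementary braid move `σ_j`: replace an adjacent pair `(a, b)` by `(a b a⁻¹, a)`. -/
inductive BraidStep {G : Type*} [Group G] : List G → List G → Prop
  | step (l₁ l₂ : List G) (a b : G) :
      BraidStep (l₁ ++ a :: b :: l₂) (l₁ ++ (a * b * a⁻¹) :: a :: l₂)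

/-- Braid equivalence of sequences: the equivalence relation generated by the
elementary moves `σ_j` (and hence also by their inverses). -/
def BraidEquiv {G : Type*} [Group G] : List G → List G → Prop :=
  Relation.EqvGen BraidStep

/-- `x` and `y` lie in the same orbit of the subgroup `H ⊆ S_d`. -/
def SameOrbit {d : ℕ} (H : Subgroup (Equiv.Perm (Fin d))) (x y : Fin d) : Prop :=
  ∃ σ ∈ H, σ x = y

namespace BMAux

open Equiv Equiv.Perm Subgroup

variable {d : ℕ}

/-- orbit relation of the closure of a set of permutations. -/
def SOS (S : Set (Equiv.Perm (Fin d))) (x y : Fin d) : Prop := SameOrbit (closure S) x y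

/-- orbit relation of the closure of the set of entries of a list. -/
def SOL (L : List (Equiv.Perm (Fin d))) (x y : Fin d) : Prop := SOS {t | t ∈ L} x y

lemma sos_refl (S : Set (Equiv.Perm (Fin d))) (x : Fin d) : SOS S x x := ⟨1, one_mem _, rfl⟩

lemma sos_symm {S : Set (Equiv.Perm (Fin d))} {x y : Fin d} (h : SOS S x y) : SOS S y x := by
  obtain ⟨σ, hσ, hx⟩ := h
  exact ⟨σ⁻¹, inv_mem hσ, by simp [← hx]⟩

lemma sos_trans {S : Set (Equiv.Perm (Fin d))} {x y z : Fin d} (h : SOS S x y)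
    (h' : SOS S y z) : SOS S x z := by
  obtain ⟨σ, hσ, hx⟩ := h
  obtain ⟨τ, hτ, hy⟩ := h'
  exact ⟨τ * σ, mul_mem hτ hσ, by simp [hx, hy]⟩

lemma sos_mono {S T : Set (Equiv.Perm (Fin d))} (hST : S ⊆ T) {x y : Fin d}
    (h : SOS S x y) : SOS T x y := by
  obtain ⟨σ, hσ, hx⟩ := h
  exact ⟨σ, Subgroup.closure_mono hST hσ, hx⟩

lemma sos_of_mem {S : Set (Equiv.Perm (Fin d))} {t : Equiv.Perm (Fin d)} (ht : t ∈ S)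
    (x : Fin d) : SOS S x (t x) := ⟨t, Subgroup.subset_closure ht, rfl⟩

/-- invariance of a set under the closure, for sets of involutions. -/
lemma closure_invariant {S : Set (Equiv.Perm (Fin d))} {T : Set (Fin d)}
    (hS : ∀ g ∈ S, g⁻¹ = g) (hT : ∀ g ∈ S, ∀ a ∈ T, g a ∈ T) :
    ∀ σ ∈ Subgroup.closure S, ∀ a ∈ T, σ a ∈ T := by
  intro σ hσ
  refine (Subgroup.closure_induction
    (p := fun σ _ => (∀ a ∈ T, σ a ∈ T) ∧ (∀ a ∈ T, σ⁻¹ a ∈ T)) ?_ ?_ ?_ ?_ hσ).1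
  · intro g hg
    exact ⟨hT g hg, by rw [hS g hg]; exact hT g hg⟩
  · simp
  · intro g h _ _ hg hh
    constructor
    · intro a ha
      have := hh.1 a ha
      simpa using hg.1 _ this
    · intro a ha
      have := hg.2 a ha
      simpa [mul_inv_rev] using hh.2 _ this
  · intro g _ hg
    exact ⟨hg.2, by simpa using hg.1⟩

lemma sol_nil {x y : Fin d} : SOL ([] : List (Equiv.Perm (Fin d))) x y ↔ x = y := by
  constructor
  · rintro ⟨σ, hσ, hx⟩
    have : σ ∈ (⊥ : Subgroup (Equiv.Perm (Fin d))) := by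
      simpa [Subgroup.closure_empty] using
        (show σ ∈ Subgroup.closure {t | t ∈ ([] : List (Equiv.Perm (Fin d)))} from hσ)
    rw [Subgroup.mem_bot] at this
    subst this
    simpa using hx
  · rintro rfl; exact sos_refl _ _

/-- Key glue lemma: orbits of `⟨swap u v, S⟩` in terms of orbits of `⟨S⟩`. -/
lemma sos_insert_swap_iff {S : Set (Equiv.Perm (Fin d))} (hS : ∀ g ∈ S, g⁻¹ = g)
    {u v : Fin d} (z w : Fin d) :
    SOS (insert (Equiv.swap u v) S) z w ↔
      SOS S z w ∨ (SOS S z u ∧ SOS S v w) ∨ (SOS S z v ∧ SOS S u w) := by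
  constructor
  · rintro ⟨σ, hσ, rfl⟩
    set T : Set (Fin d) :=
      {w | SOS S z w ∨ (SOS S z u ∧ SOS S v w) ∨ (SOS S z v ∧ SOS S u w)} with hTdef
    have hz : z ∈ T := Or.inl (sos_refl _ _)
    have hinv : ∀ g ∈ insert (Equiv.swap u v) S, g⁻¹ = g := by
      rintro g (rfl | hg)
      · exact Equiv.swap_inv u v
      · exact hS g hg
    have hstep : ∀ g ∈ insert (Equiv.swap u v) S, ∀ a ∈ T, g a ∈ T := by
      rintro g (rfl | hg) a ha
      · rcases eq_or_ne a u with rfl | hau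
        · rw [Equiv.swap_apply_left]
          rcases ha with h | ⟨h1, h2⟩ | ⟨h1, h2⟩
          · exact Or.inr (Or.inl ⟨h, sos_refl _ _⟩)
          · exact Or.inl (sos_trans h1 (sos_trans (sos_symm h2) (sos_refl _ _)))
          · exact Or.inl h1
        rcases eq_or_ne a v with rfl | hav
        · rw [Equiv.swap_apply_right]
          rcases ha with h | ⟨h1, h2⟩ | ⟨h1, h2⟩
          · exact Or.inr (Or.inr ⟨h, sos_refl _ _⟩)
          · exact Or.inl h1
          · exact Or.inl (sos_trans h1 (sos_symm h2))
        · rwa [Equiv.swap_apply_of_ne_of_ne hau hav]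
      · rcases ha with h | ⟨h1, h2⟩ | ⟨h1, h2⟩
        · exact Or.inl (sos_trans h (sos_of_mem hg a))
        · exact Or.inr (Or.inl ⟨h1, sos_trans h2 (sos_of_mem hg a)⟩)
        · exact Or.inr (Or.inr ⟨h1, sos_trans h2 (sos_of_mem hg a)⟩)
    exact closure_invariant hinv hstep σ hσ z hz
  · have hmono : ∀ {a b : Fin d}, SOS S a b → SOS (insert (Equiv.swap u v) S) a b :=
      fun h => sos_mono (Set.subset_insert _ _) h
    have hsw : SOS (insert (Equiv.swap u v) S) u v := by
      have := sos_of_mem (S := insert (Equiv.swap u v) S) (Set.mem_insert _ _) u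
      rwa [Equiv.swap_apply_left] at this
    rintro (h | ⟨h1, h2⟩ | ⟨h1, h2⟩)
    · exact hmono h
    · exact sos_trans (hmono h1) (sos_trans hsw (hmono h2))
    · exact sos_trans (hmono h1) (sos_trans (sos_symm hsw) (hmono h2))

lemma entries_cons_set (t : Equiv.Perm (Fin d)) (M : List (Equiv.Perm (Fin d))) :
    {x | x ∈ t :: M} = insert t {x | x ∈ M} := by
  ext g; simp [List.mem_cons]

lemma sol_cons_swap_iff {M : List (Equiv.Perm (Fin d))} (hM : ∀ g ∈ M, Equiv.Perm.IsSwap g)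
    {u v : Fin d} (z w : Fin d) :
    SOL (Equiv.swap u v :: M) z w ↔
      SOL M z w ∨ (SOL M z u ∧ SOL M v w) ∨ (SOL M z v ∧ SOL M u w) := by
  have hinv : ∀ g ∈ {x | x ∈ M}, g⁻¹ = g := by
    intro g hg
    obtain ⟨a, b, _, rfl⟩ := hM g hg
    exact Equiv.swap_inv a b
  unfold SOL
  rw [entries_cons_set]
  exact sos_insert_swap_iff hinv z w

end BMAux

section BraidInfra

variable {G : Type*} [Group G]

lemma be_refl (L : List G) : BraidEquiv L L := Relation.EqvGen.refl L

lemma be_symm {L M : List G} (h : BraidEquiv L M) : BraidEquiv M L := Relation.EqvGen.symm _ _ h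

lemma be_trans {L M N : List G} (h : BraidEquiv L M) (h' : BraidEquiv M N) : BraidEquiv L N :=
  Relation.EqvGen.trans _ _ _ h h'

lemma be_of_step {L M : List G} (h : BraidStep L M) : BraidEquiv L M := Relation.EqvGen.rel _ _ h

lemma be_step_front (a b : G) (M : List G) :
    BraidEquiv (a :: b :: M) ((a * b * a⁻¹) :: a :: M) :=
  be_of_step (BraidStep.step [] M a b)

lemma be_step_front1 (c a b : G) (M : List G) :
    BraidEquiv (c :: a :: b :: M) (c :: (a * b * a⁻¹) :: a :: M) :=
  be_of_step (BraidStep.step [c] M a b)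

lemma braidStep_length {L M : List G} (h : BraidStep L M) : L.length = M.length := by
  rcases h with ⟨l₁, l₂, a, b⟩; simp

lemma be_length {L M : List G} (h : BraidEquiv L M) : L.length = M.length := by
  induction h with
  | rel _ _ h => exact braidStep_length h
  | refl => rfl
  | symm _ _ _ ih => exact ih.symm
  | trans _ _ _ _ _ ih1 ih2 => exact ih1.trans ih2

lemma braidStep_cons {L M : List G} (c : G) (h : BraidStep L M) : BraidStep (c :: L) (c :: M) := by
  rcases h with ⟨l₁, l₂, a, b⟩
  exact BraidStep.step (c :: l₁) l₂ a b

lemma be_cons {L M : List G} (c : G) (h : BraidEquiv L M) : BraidEquiv (c :: L) (c :: M) := by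
  induction h with
  | rel _ _ h => exact be_of_step (braidStep_cons c h)
  | refl => exact be_refl _
  | symm _ _ _ ih => exact be_symm ih
  | trans _ _ _ _ _ ih1 ih2 => exact be_trans ih1 ih2

lemma be_append_left {L M : List G} (P : List G) (h : BraidEquiv L M) :
    BraidEquiv (P ++ L) (P ++ M) := by
  induction P with
  | nil => simpa using h
  | cons c P ih => exact be_cons c ih

lemma braidStep_append_right {L M : List G} (R : List G) (h : BraidStep L M) :
    BraidStep (L ++ R) (M ++ R) := by
  rcases h with ⟨l₁, l₂, a, b⟩
  have h1 : (l₁ ++ a :: b :: l₂) ++ R = l₁ ++ a :: b :: (l₂ ++ R) := by simp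
  have h2 : (l₁ ++ (a * b * a⁻¹) :: a :: l₂) ++ R = l₁ ++ (a * b * a⁻¹) :: a :: (l₂ ++ R) := by
    simp
  rw [h1, h2]
  exact BraidStep.step l₁ (l₂ ++ R) a b

lemma be_append_right {L M : List G} (R : List G) (h : BraidEquiv L M) :
    BraidEquiv (L ++ R) (M ++ R) := by
  induction h with
  | rel _ _ h => exact be_of_step (braidStep_append_right R h)
  | refl => exact be_refl _
  | symm _ _ _ ih => exact be_symm ih
  | trans _ _ _ _ _ ih1 ih2 => exact be_trans ih1 ih2

lemma braidStep_closure {L M : List G} (h : BraidStep L M) :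
    Subgroup.closure {x | x ∈ L} = Subgroup.closure {x | x ∈ M} := by
  rcases h with ⟨l₁, l₂, a, b⟩
  apply le_antisymm
  · rw [Subgroup.closure_le]
    intro g hg
    simp only [Set.mem_setOf_eq, List.mem_append, List.mem_cons] at hg
    have hab : a * b * a⁻¹ ∈ Subgroup.closure {x | x ∈ l₁ ++ (a * b * a⁻¹) :: a :: l₂} :=
      Subgroup.subset_closure (by simp)
    have ha : a ∈ Subgroup.closure {x | x ∈ l₁ ++ (a * b * a⁻¹) :: a :: l₂} :=
      Subgroup.subset_closure (by simp)
    rcases hg with h | h | h | h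
    · exact Subgroup.subset_closure (by simp [h])
    · rw [h]; exact ha
    · rw [h]
      have hm := mul_mem (mul_mem (inv_mem ha) hab) ha
      group at hm
      simpa [zpow_neg, zpow_one] using hm
    · exact Subgroup.subset_closure (by simp [h])
  · rw [Subgroup.closure_le]
    intro g hg
    simp only [Set.mem_setOf_eq, List.mem_append, List.mem_cons] at hg
    have ha : a ∈ Subgroup.closure {x | x ∈ l₁ ++ a :: b :: l₂} :=
      Subgroup.subset_closure (by simp)
    have hb : b ∈ Subgroup.closure {x | x ∈ l₁ ++ a :: b :: l₂} :=
      Subgroup.subset_closure (by simp)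
    rcases hg with h | h | h | h
    · exact Subgroup.subset_closure (by simp [h])
    · rw [h]; exact mul_mem (mul_mem ha hb) (inv_mem ha)
    · rw [h]; exact ha
    · exact Subgroup.subset_closure (by simp [h])

lemma be_closure {L M : List G} (h : BraidEquiv L M) :
    Subgroup.closure {x | x ∈ L} = Subgroup.closure {x | x ∈ M} := by
  induction h with
  | rel _ _ h => exact braidStep_closure h
  | refl => rfl
  | symm _ _ _ ih => exact ih.symm
  | trans _ _ _ _ _ ih1 ih2 => exact ih1.trans ih2

end BraidInfra

section SwapInfra

variable {d : ℕ}

lemma conj_swap (σ : Equiv.Perm (Fin d)) (x y : Fin d) :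
    σ * Equiv.swap x y * σ⁻¹ = Equiv.swap (σ x) (σ y) :=
  (Equiv.swap_apply_apply σ x y).symm

lemma braidStep_swaps {L M : List (Equiv.Perm (Fin d))} (h : BraidStep L M)
    (hL : ∀ t ∈ L, Equiv.Perm.IsSwap t) : ∀ t ∈ M, Equiv.Perm.IsSwap t := by
  rcases h with ⟨l₁, l₂, a, b⟩
  intro s hs
  simp only [List.mem_append, List.mem_cons] at hs
  rcases hs with h | h | h | h
  · exact hL s (by simp [h])
  · rw [h]
    obtain ⟨x, y, hxy, hb⟩ := hL b (by simp)
    rw [hb, conj_swap a x y]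
    exact ⟨a x, a y, by simp [hxy], rfl⟩
  · rw [h]; exact hL a (by simp)
  · exact hL s (by simp [h])

lemma braidStep_swaps_rev {L M : List (Equiv.Perm (Fin d))} (h : BraidStep L M)
    (hM : ∀ t ∈ M, Equiv.Perm.IsSwap t) : ∀ t ∈ L, Equiv.Perm.IsSwap t := by
  rcases h with ⟨l₁, l₂, a, b⟩
  intro s hs
  simp only [List.mem_append, List.mem_cons] at hs
  rcases hs with h | h | h | h
  · exact hM s (by simp [h])
  · rw [h]; exact hM a (by simp)
  · rw [h]
    obtain ⟨x, y, hxy, hb⟩ := hM (a * b * a⁻¹) (by simp)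
    have hbeq : b = a⁻¹ * (a * b * a⁻¹) * a := by group
    rw [hbeq, hb]
    have hc := conj_swap a⁻¹ x y
    rw [inv_inv] at hc
    rw [hc]
    exact ⟨a⁻¹ x, a⁻¹ y, by simp [hxy], rfl⟩
  · exact hM s (by simp [h])

lemma be_swaps_iff {L M : List (Equiv.Perm (Fin d))} (h : BraidEquiv L M) :
    (∀ t ∈ L, Equiv.Perm.IsSwap t) ↔ (∀ t ∈ M, Equiv.Perm.IsSwap t) := by
  induction h with
  | rel _ _ h => exact ⟨braidStep_swaps h, braidStep_swaps_rev h⟩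
  | refl => exact Iff.rfl
  | symm _ _ _ ih => exact ih.symm
  | trans _ _ _ _ _ ih1 ih2 => exact ih1.trans ih2

lemma be_swaps {L M : List (Equiv.Perm (Fin d))} (h : BraidEquiv L M)
    (hL : ∀ t ∈ L, Equiv.Perm.IsSwap t) : ∀ t ∈ M, Equiv.Perm.IsSwap t :=
  (be_swaps_iff h).1 hL

end SwapInfra

section PairMoves

variable {G : Type*} [Group G]

lemma be_pair_conj_front (E : List G) (t : G) :
    BraidEquiv (E ++ [t, t]) ((E.prod * t * E.prod⁻¹) :: (E.prod * t * E.prod⁻¹) :: E) := by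
  induction E with
  | nil => simpa using be_refl [t, t]
  | cons u E ih =>
    have h1 : BraidEquiv (u :: (E ++ [t, t]))
        (u :: ((E.prod * t * E.prod⁻¹) :: (E.prod * t * E.prod⁻¹) :: E)) := be_cons u ih
    set s' := E.prod * t * E.prod⁻¹ with hs'
    have h2 := be_step_front u s' (s' :: E)
    have h3 := be_step_front1 (u * s' * u⁻¹) u s' E
    have key : (u :: E).prod * t * (u :: E).prod⁻¹ = u * s' * u⁻¹ := by
      rw [List.prod_cons, hs']
      group
    rw [key]
    exact be_trans h1 (be_trans h2 h3)

lemma be_pair_move_right {s : G} (hs : s * s = 1) (E : List G) :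
    BraidEquiv (s :: s :: E) (E ++ [s, s]) := by
  have hinv : s⁻¹ = s := inv_eq_of_mul_eq_one_right hs
  induction E with
  | nil => exact be_refl _
  | cons u E ih =>
    have e1 := be_step_front1 s s u E
    have e2 := be_step_front s (s * u * s⁻¹) (s :: E)
    have key : s * (s * u * s⁻¹) * s⁻¹ = u := by
      have h : s * (s * u * s⁻¹) * s⁻¹ = (s * s) * u * ((s * s)⁻¹) := by group
      rw [h, hs]; simp
    rw [key] at e2
    exact be_trans e1 (be_trans e2 (be_cons u ih))

end PairMoves

section Conj

variable {d : ℕ}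

lemma be_pair_conj (D : List (Equiv.Perm (Fin d))) :
    ∀ w ∈ Subgroup.closure {x | x ∈ D}, ∀ t : Equiv.Perm (Fin d), t * t = 1 →
      BraidEquiv (D ++ [t, t]) (D ++ [w * t * w⁻¹, w * t * w⁻¹]) := by
  set C : Submonoid (Equiv.Perm (Fin d)) :=
    { carrier := {w | ∀ t : Equiv.Perm (Fin d), t * t = 1 →
        BraidEquiv (D ++ [t, t]) (D ++ [w * t * w⁻¹, w * t * w⁻¹])}
      one_mem' := by
        intro t ht
        simpa using be_refl (D ++ [t, t])
      mul_mem' := by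
        intro w₁ w₂ hw₁ hw₂ t ht
        have h2 := hw₂ t ht
        have hsq : (w₂ * t * w₂⁻¹) * (w₂ * t * w₂⁻¹) = 1 := by
          have h : (w₂ * t * w₂⁻¹) * (w₂ * t * w₂⁻¹) = w₂ * (t * t) * w₂⁻¹ := by group
          rw [h, ht]; simp
        have h1 := hw₁ (w₂ * t * w₂⁻¹) hsq
        rw [show w₁ * (w₂ * t * w₂⁻¹) * w₁⁻¹ = (w₁ * w₂) * t * (w₁ * w₂)⁻¹ by group] at h1
        exact be_trans h2 h1 } with hC
  set SP : Set (Equiv.Perm (Fin d)) := {p | ∃ D₁ D₂ : List (Equiv.Perm (Fin d)),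
    D = D₁ ++ D₂ ∧ p = D₂.prod} with hSP
  have hSPC : SP ⊆ (C : Set (Equiv.Perm (Fin d))) := by
    rintro p ⟨D₁, D₂, rfl, rfl⟩
    intro t ht
    set s := D₂.prod * t * D₂.prod⁻¹ with hs
    have hss : s * s = 1 := by
      have h : s * s = D₂.prod * (t * t) * D₂.prod⁻¹ := by rw [hs]; group
      rw [h, ht]; simp
    have e1 : BraidEquiv (D₁ ++ (D₂ ++ [t, t])) (D₁ ++ (s :: s :: D₂)) :=
      be_append_left D₁ (be_pair_conj_front D₂ t)
    have e2 : BraidEquiv (D₁ ++ (s :: s :: D₂)) (D₁ ++ (D₂ ++ [s, s])) :=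
      be_append_left D₁ (be_pair_move_right hss D₂)
    have efin := be_trans e1 e2
    rw [← List.append_assoc, ← List.append_assoc] at efin
    exact efin
  intro w hw t ht
  have hGinv : ∀ x ∈ Submonoid.closure SP, x⁻¹ ∈ Submonoid.closure SP := by
    intro x hx
    have h1 : x ^ orderOf x = 1 := pow_orderOf_eq_one x
    have hpos : 0 < orderOf x := orderOf_pos x
    have hxinv : x⁻¹ = x ^ (orderOf x - 1) := by
      apply inv_eq_of_mul_eq_one_right
      have h2 : x * x ^ (orderOf x - 1) = x ^ orderOf x := by
        rw [← pow_succ']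
        congr 1
        omega
      rw [h2, h1]
    rw [hxinv]
    exact Submonoid.pow_mem _ hx _
  let G' : Subgroup (Equiv.Perm (Fin d)) :=
    { toSubmonoid := Submonoid.closure SP
      inv_mem' := fun {x} hx => hGinv x hx }
  have hle : Subgroup.closure {x | x ∈ D} ≤ G' := by
    rw [Subgroup.closure_le]
    intro g hg
    obtain ⟨D₁, D₂, hD⟩ := List.append_of_mem hg
    have m1 : (g :: D₂).prod ∈ Submonoid.closure SP :=
      Submonoid.subset_closure ⟨D₁, g :: D₂, hD, rfl⟩
    have m2 : D₂.prod ∈ Submonoid.closure SP :=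
      Submonoid.subset_closure ⟨D₁ ++ [g], D₂, by simp [hD], rfl⟩
    have hgeq : g = (g :: D₂).prod * (D₂.prod)⁻¹ := by rw [List.prod_cons]; group
    show g ∈ G'
    rw [hgeq]
    exact mul_mem (show (g :: D₂).prod ∈ G' from m1) (inv_mem (show D₂.prod ∈ G' from m2))
  have hwSP : w ∈ Submonoid.closure SP := hle hw
  have hwC : w ∈ C := Submonoid.closure_le.mpr hSPC hwSP
  exact hwC t ht

end Conj

section Join

variable {d : ℕ}

open Equiv Equiv.Perm

lemma join_fixed_iff {π : Equiv.Perm (Fin d)} {u v : Fin d} (h : ¬ π.SameCycle u v)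
    (x : Fin d) : (Equiv.swap u v * π) x = x ↔ π x = x ∧ x ≠ u ∧ x ≠ v := by
  have huv : u ≠ v := fun he => h (he ▸ Equiv.Perm.SameCycle.refl π u)
  constructor
  · intro hx
    rw [Equiv.Perm.mul_apply] at hx
    by_cases h1 : π x = u
    · rw [h1, Equiv.swap_apply_left] at hx
      subst hx
      exfalso
      exact h (Equiv.Perm.SameCycle.symm ⟨1, by simpa using h1⟩)
    by_cases h2 : π x = v
    · rw [h2, Equiv.swap_apply_right] at hx
      subst hx
      exact absurd ⟨1, by simpa using h2⟩ h
    · rw [Equiv.swap_apply_of_ne_of_ne h1 h2] at hx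
      refine ⟨hx, ?_, ?_⟩
      · rintro rfl; rw [hx] at h1; exact h1 rfl
      · rintro rfl; rw [hx] at h2; exact h2 rfl
  · rintro ⟨h1, h2, h3⟩
    rw [Equiv.Perm.mul_apply, h1, Equiv.swap_apply_of_ne_of_ne h2 h3]

lemma join_sameCycle_uv {π : Equiv.Perm (Fin d)} {u v : Fin d} (h : ¬ π.SameCycle u v) :
    (Equiv.swap u v * π).SameCycle u v := by
  set g := Equiv.swap u v * π with hg
  by_contra hne
  have hex : ∃ k, 0 < k ∧ (g ^ k) v = v :=
    ⟨orderOf g, orderOf_pos g, by rw [pow_orderOf_eq_one]; rfl⟩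
  classical
  set m := Nat.find hex with hmdef
  obtain ⟨hmpos, hmfix⟩ := Nat.find_spec hex
  have hmin : ∀ k, k < m → ¬(0 < k ∧ (g ^ k) v = v) := fun k hk => Nat.find_min hex hk
  have key : ∀ j, j ≤ m - 1 → (π ^ j) v = (g ^ j) v := by
    intro j
    induction j with
    | zero => simp
    | succ j ih =>
      intro hj
      have hj' : j ≤ m - 1 := by omega
      have hih := ih hj'
      have hgj : (g ^ (j + 1)) v = Equiv.swap u v (π ((g ^ j) v)) := by
        rw [pow_succ', Equiv.Perm.mul_apply, hg, Equiv.Perm.mul_apply]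
      by_cases h1 : π ((g ^ j) v) = u
      · exfalso
        rw [h1, Equiv.swap_apply_left] at hgj
        exact hmin (j + 1) (by omega) ⟨by omega, hgj⟩
      by_cases h2 : π ((g ^ j) v) = v
      · exfalso
        rw [h2, Equiv.swap_apply_right] at hgj
        exact hne (Equiv.Perm.SameCycle.symm ⟨(j + 1 : ℕ), by rw [zpow_natCast]; exact hgj⟩)
      · rw [hgj, Equiv.swap_apply_of_ne_of_ne h1 h2, pow_succ', Equiv.Perm.mul_apply, hih]
  have hlast : (π ^ m) v = u := by
    have h1 : (π ^ (m - 1)) v = (g ^ (m - 1)) v := key _ le_rfl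
    have h2 : (g ^ m) v = v := hmfix
    set X := (g ^ (m - 1)) v with hX
    have h3 : g X = v := by
      rw [hX, ← Equiv.Perm.mul_apply, ← pow_succ']
      have hm1 : m - 1 + 1 = m := by omega
      rw [hm1]; exact h2
    rw [hg, Equiv.Perm.mul_apply] at h3
    have h4 : π X = u := by
      have hc := congrArg (Equiv.swap u v) h3
      rwa [Equiv.swap_apply_self, Equiv.swap_apply_right] at hc
    have h5 : (π ^ m) v = π ((π ^ (m - 1)) v) := by
      rw [← Equiv.Perm.mul_apply, ← pow_succ']
      congr 2
      omega
    rw [h5, h1]; exact h4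
  exact h (Equiv.Perm.SameCycle.symm ⟨(m : ℕ), by rw [zpow_natCast]; exact hlast⟩)

lemma join_sameCycle_of_sameCycle {π : Equiv.Perm (Fin d)} {u v : Fin d}
    (h : ¬ π.SameCycle u v) {z w : Fin d} (hzw : π.SameCycle z w) :
    (Equiv.swap u v * π).SameCycle z w := by
  set g := Equiv.swap u v * π with hg
  have huv : g.SameCycle u v := join_sameCycle_uv h
  have step1 : ∀ a : Fin d, g.SameCycle a (π a) := by
    intro a
    have hga : g a = Equiv.swap u v (π a) := by rw [hg, Equiv.Perm.mul_apply]
    by_cases h1 : π a = u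
    · rw [h1, Equiv.swap_apply_left] at hga
      have hav : g.SameCycle a v := ⟨1, by simpa using hga⟩
      rw [h1]
      exact hav.trans huv.symm
    by_cases h2 : π a = v
    · rw [h2, Equiv.swap_apply_right] at hga
      have hau : g.SameCycle a u := ⟨1, by simpa using hga⟩
      rw [h2]
      exact hau.trans huv
    · rw [Equiv.swap_apply_of_ne_of_ne h1 h2] at hga
      exact ⟨1, by simpa using hga⟩
  have main : ∀ i : ℤ, g.SameCycle z ((π ^ i) z) := by
    intro i
    induction i using Int.induction_on with
    | zero => simp [Equiv.Perm.SameCycle.refl]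
    | succ i ih =>
      have he : (π ^ ((i : ℤ) + 1)) z = π ((π ^ (i : ℤ)) z) := by
        rw [add_comm, zpow_add, zpow_one, Equiv.Perm.mul_apply]
      rw [he]
      exact ih.trans (step1 _)
    | pred i ih =>
      have he : (π ^ (-(i : ℤ) - 1)) z = π⁻¹ ((π ^ (-(i : ℤ))) z) := by
        rw [sub_eq_add_neg, add_comm, zpow_add, zpow_neg, zpow_one, Equiv.Perm.mul_apply]
      rw [he]
      refine ih.trans ?_
      have := step1 (π⁻¹ ((π ^ (-(i : ℤ))) z))
      rw [Equiv.Perm.coe_inv, Equiv.apply_symm_apply] at this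
      exact this.symm
  obtain ⟨i, hi⟩ := hzw
  exact hi ▸ main i

lemma join_sameCycle_iff {π : Equiv.Perm (Fin d)} {u v : Fin d} (h : ¬ π.SameCycle u v)
    (z w : Fin d) :
    (Equiv.swap u v * π).SameCycle z w ↔
      π.SameCycle z w ∨ (π.SameCycle z u ∧ π.SameCycle v w) ∨
        (π.SameCycle z v ∧ π.SameCycle u w) := by
  set g := Equiv.swap u v * π with hg
  have huv : g.SameCycle u v := join_sameCycle_uv h
  constructor
  · rintro ⟨i, rfl⟩
    set R : Fin d → Fin d → Prop := fun a b =>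
      π.SameCycle a b ∨ (π.SameCycle a u ∧ π.SameCycle v b) ∨
        (π.SameCycle a v ∧ π.SameCycle u b) with hR
    have Rrefl : ∀ a, R a a := fun a => Or.inl (Equiv.Perm.SameCycle.refl _ _)
    have Rsymm : ∀ a b, R a b → R b a := by
      rintro a b (hc | ⟨h1, h2⟩ | ⟨h1, h2⟩)
      · exact Or.inl hc.symm
      · exact Or.inr (Or.inr ⟨h2.symm, h1.symm⟩)
      · exact Or.inr (Or.inl ⟨h2.symm, h1.symm⟩)
    have Rstep : ∀ a b, R a b → R a (g b) := by
      rintro a b hab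
      have hgb : g b = Equiv.swap u v (π b) := by rw [hg, Equiv.Perm.mul_apply]
      by_cases h1 : π b = u
      · rw [h1, Equiv.swap_apply_left] at hgb
        rw [hgb]
        have hbu : π.SameCycle b u := ⟨1, by simpa using h1⟩
        rcases hab with hc | ⟨ha1, ha2⟩ | ⟨ha1, ha2⟩
        · exact Or.inr (Or.inl ⟨hc.trans hbu, Equiv.Perm.SameCycle.refl _ _⟩)
        · exact absurd (ha2.trans hbu).symm h
        · exact Or.inl ha1
      by_cases h2 : π b = v
      · rw [h2, Equiv.swap_apply_right] at hgb
        rw [hgb]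
        have hbv : π.SameCycle b v := ⟨1, by simpa using h2⟩
        rcases hab with hc | ⟨ha1, ha2⟩ | ⟨ha1, ha2⟩
        · exact Or.inr (Or.inr ⟨hc.trans hbv, Equiv.Perm.SameCycle.refl _ _⟩)
        · exact Or.inl ha1
        · exact absurd (ha2.trans hbv) h
      · rw [Equiv.swap_apply_of_ne_of_ne h1 h2] at hgb
        rw [hgb]
        have hbp : π.SameCycle b (π b) := ⟨1, rfl⟩
        rcases hab with hc | ⟨ha1, ha2⟩ | ⟨ha1, ha2⟩
        · exact Or.inl (hc.trans hbp)
        · exact Or.inr (Or.inl ⟨ha1, ha2.trans hbp⟩)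
        · exact Or.inr (Or.inr ⟨ha1, ha2.trans hbp⟩)
    have Rnat : ∀ (n : ℕ) (a : Fin d), R a ((g ^ n) a) := by
      intro n a
      induction n with
      | zero => simpa using Rrefl a
      | succ n ih =>
        have : (g ^ (n + 1)) a = g ((g ^ n) a) := by
          rw [pow_succ', Equiv.Perm.mul_apply]
        rw [this]
        exact Rstep _ _ ih
    rcases i with n | n
    · have : (g ^ (Int.ofNat n)) z = (g ^ n) z := by
        rw [Int.ofNat_eq_coe, zpow_natCast]
      rw [this]
      exact Rnat n z
    · set b := (g ^ (Int.negSucc n)) z with hb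
      have hzb : (g ^ (n + 1)) b = z := by
        rw [hb, ← Equiv.Perm.mul_apply, ← zpow_natCast g (n + 1), ← zpow_add]
        have he : (↑(n + 1) : ℤ) + Int.negSucc n = 0 := by
          rw [Int.negSucc_eq]; push_cast; ring
        rw [he, zpow_zero, Equiv.Perm.one_apply]
      have := Rnat (n + 1) b
      rw [hzb] at this
      exact Rsymm _ _ this
  · rintro (hc | ⟨h1, h2⟩ | ⟨h1, h2⟩)
    · exact join_sameCycle_of_sameCycle h hc
    · exact ((join_sameCycle_of_sameCycle h h1).trans huv).trans
        (join_sameCycle_of_sameCycle h h2)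
    · exact ((join_sameCycle_of_sameCycle h h1).trans huv.symm).trans
        (join_sameCycle_of_sameCycle h h2)

end Join

section Forest

open BMAux

variable {d : ℕ}

/-- recursive "forest" predicate for a list of transpositions. -/
def RForest : List (Equiv.Perm (Fin d)) → Prop
  | [] => True
  | t :: M => RForest M ∧ ∀ u v : Fin d, u ≠ v → t = Equiv.swap u v → ¬ SOL M u v

lemma sol_mono_cons {M : List (Equiv.Perm (Fin d))} (t : Equiv.Perm (Fin d)) {x y : Fin d}
    (h : SOL M x y) : SOL (t :: M) x y := by
  apply sos_mono (S := {g | g ∈ M}) _ h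
  intro g hg
  exact List.mem_cons_of_mem t hg

lemma sol_braid {L M : List (Equiv.Perm (Fin d))} (h : BraidEquiv L M) (x y : Fin d) :
    SOL L x y ↔ SOL M x y := by
  unfold SOL SOS
  rw [be_closure h]

lemma swap_fix_iff {u v x : Fin d} (huv : u ≠ v) :
    Equiv.swap u v x = x ↔ x ≠ u ∧ x ≠ v := by
  constructor
  · intro hx
    constructor
    · rintro rfl; rw [Equiv.swap_apply_left] at hx; exact huv hx.symm
    · rintro rfl; rw [Equiv.swap_apply_right] at hx; exact huv hx
  · rintro ⟨h1, h2⟩; exact Equiv.swap_apply_of_ne_of_ne h1 h2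

open Classical in
/-- number of entries of `L` that move a point satisfying `P`. -/
noncomputable def countMeets (P : Fin d → Prop) (L : List (Equiv.Perm (Fin d))) : ℕ :=
  L.countP (fun t => decide (∃ z, t z ≠ z ∧ P z))

@[simp] lemma countMeets_nil (P : Fin d → Prop) : countMeets P ([] : List (Equiv.Perm (Fin d))) = 0 := by
  simp [countMeets]

open Classical in
lemma countMeets_cons (P : Fin d → Prop) (t : Equiv.Perm (Fin d)) (M : List (Equiv.Perm (Fin d))) :
    countMeets P (t :: M) = countMeets P M + (if ∃ z, t z ≠ z ∧ P z then 1 else 0) := by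
  simp [countMeets, List.countP_cons]

lemma countMeets_congr {P Q : Fin d → Prop} (h : ∀ z, P z ↔ Q z)
    (L : List (Equiv.Perm (Fin d))) : countMeets P L = countMeets Q L := by
  unfold countMeets
  congr 1
  funext t
  rw [decide_eq_decide]
  exact exists_congr fun z => and_congr_right fun _ => h z

open Classical in
lemma countMeets_split {P Q : Fin d → Prop} (L : List (Equiv.Perm (Fin d)))
    (hex : ∀ t ∈ L, ¬((∃ z, t z ≠ z ∧ P z) ∧ (∃ z, t z ≠ z ∧ Q z))) :
    countMeets (fun z => P z ∨ Q z) L = countMeets P L + countMeets Q L := by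
  induction L with
  | nil => simp
  | cons t M ih =>
    have ihM := ih (fun t' ht' => hex t' (List.mem_cons_of_mem t ht'))
    rw [countMeets_cons, countMeets_cons, countMeets_cons, ihM]
    have hnot := hex t (List.mem_cons_self)
    by_cases hP : ∃ z, t z ≠ z ∧ P z
    · have hQ : ¬ ∃ z, t z ≠ z ∧ Q z := fun hq => hnot ⟨hP, hq⟩
      have hPQ : ∃ z, t z ≠ z ∧ (P z ∨ Q z) := by
        obtain ⟨z, h1, h2⟩ := hP; exact ⟨z, h1, Or.inl h2⟩
      simp [hP, hQ, hPQ]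
      omega
    · by_cases hQ : ∃ z, t z ≠ z ∧ Q z
      · have hPQ : ∃ z, t z ≠ z ∧ (P z ∨ Q z) := by
          obtain ⟨z, h1, h2⟩ := hQ; exact ⟨z, h1, Or.inr h2⟩
        simp [hP, hQ, hPQ]
        omega
      · have hPQ : ¬ ∃ z, t z ≠ z ∧ (P z ∨ Q z) := by
          rintro ⟨z, h1, (h2 | h2)⟩
          · exact hP ⟨z, h1, h2⟩
          · exact hQ ⟨z, h1, h2⟩
        simp [hP, hQ, hPQ]


lemma tg3_case {M : List (Equiv.Perm (Fin d))} (hswM : ∀ t' ∈ M, t'.IsSwap)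
    (C_M : ∀ x : Fin d, {z | SOL M x z}.ncard = countMeets (SOL M x) M + 1)
    {u v x : Fin d} (huv : u ≠ v) (hMuv : ¬ SOL M u v) (hxu : SOL M x u) :
    {z | SOL (Equiv.swap u v :: M) x z}.ncard
      = countMeets (SOL (Equiv.swap u v :: M) x) (Equiv.swap u v :: M) + 1 := by
  have glue : ∀ z w, SOL (Equiv.swap u v :: M) z w ↔
      SOL M z w ∨ (SOL M z u ∧ SOL M v w) ∨ (SOL M z v ∧ SOL M u w) :=
    fun z w => sol_cons_swap_iff hswM z w
  have hxv : ¬ SOL M x v := fun h => hMuv (sos_trans (sos_symm hxu) h)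
  have hiff : ∀ z, SOL (Equiv.swap u v :: M) x z ↔ (SOL M u z ∨ SOL M v z) := by
    intro z
    rw [glue x z]
    constructor
    · rintro (h | ⟨h1, h2⟩ | ⟨h1, h2⟩)
      · exact Or.inl (sos_trans (sos_symm hxu) h)
      · exact Or.inr h2
      · exact absurd h1 hxv
    · rintro (h | h)
      · exact Or.inl (sos_trans hxu h)
      · exact Or.inr (Or.inl ⟨hxu, h⟩)
  have hset : {z | SOL (Equiv.swap u v :: M) x z} = {z | SOL M u z} ∪ {z | SOL M v z} := by
    ext z
    simp only [Set.mem_setOf_eq, Set.mem_union]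
    exact hiff z
  have hdisj : Disjoint {z | SOL M u z} {z | SOL M v z} := by
    rw [Set.disjoint_left]
    intro z h1 h2
    exact hMuv (sos_trans h1 (sos_symm h2))
  have hexcl : ∀ t' ∈ M, ¬((∃ z, t' z ≠ z ∧ SOL M u z) ∧ (∃ z, t' z ≠ z ∧ SOL M v z)) := by
    rintro t' ht' ⟨⟨z1, hz1, hu1⟩, ⟨z2, hz2, hv2⟩⟩
    obtain ⟨a, b, hab, rfl⟩ := hswM t' ht'
    have hab' : SOL M a b := by
      have h := sos_of_mem (S := {g | g ∈ M}) (show Equiv.swap a b ∈ {g | g ∈ M} from ht') a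
      rwa [Equiv.swap_apply_left] at h
    have hz1' : z1 = a ∨ z1 = b := by
      by_contra hc
      push_neg at hc
      exact hz1 (Equiv.swap_apply_of_ne_of_ne hc.1 hc.2)
    have hz2' : z2 = a ∨ z2 = b := by
      by_contra hc
      push_neg at hc
      exact hz2 (Equiv.swap_apply_of_ne_of_ne hc.1 hc.2)
    apply hMuv
    rcases hz1' with rfl | rfl <;> rcases hz2' with rfl | rfl
    · exact sos_trans hu1 (sos_symm hv2)
    · exact sos_trans hu1 (sos_trans hab' (sos_symm hv2))
    · exact sos_trans hu1 (sos_trans (sos_symm hab') (sos_symm hv2))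
    · exact sos_trans hu1 (sos_symm hv2)
  have hterm : ∃ z, Equiv.swap u v z ≠ z ∧ SOL (Equiv.swap u v :: M) x z := by
    refine ⟨u, ?_, (hiff u).mpr (Or.inl (sos_refl _ _))⟩
    rw [Equiv.swap_apply_left]
    exact fun hc => huv hc.symm
  rw [hset, Set.ncard_union_eq hdisj (Set.toFinite _) (Set.toFinite _), C_M u, C_M v]
  rw [countMeets_cons, if_pos hterm, countMeets_congr hiff M, countMeets_split M hexcl]
  omega

/-- the main inductive structure theorem for forests. -/
lemma treegen : ∀ (L : List (Equiv.Perm (Fin d))), (∀ t ∈ L, t.IsSwap) → RForest L →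
    (∀ x, L.prod x = x ↔ ∀ t ∈ L, t x = x) ∧
    (∀ x y, SOL L x y ↔ L.prod.SameCycle x y) ∧
    (∀ x : Fin d, {z | SOL L x z}.ncard = countMeets (SOL L x) L + 1) := by
  intro L
  induction L with
  | nil =>
    intro _ _
    refine ⟨by simp, ?_, ?_⟩
    · intro x y
      rw [sol_nil]
      simp only [List.prod_nil]
      constructor
      · rintro rfl; exact Equiv.Perm.SameCycle.refl _ _
      · rintro ⟨i, hi⟩; simpa using hi
    · intro x
      have hs : {z | SOL ([] : List (Equiv.Perm (Fin d))) x z} = {x} := by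
        ext z
        rw [Set.mem_setOf_eq, sol_nil, Set.mem_singleton_iff]
        exact eq_comm
      rw [hs]
      simp
  | cons t M ih =>
    intro hsw hfor
    obtain ⟨u, v, huv, rfl⟩ := hsw t (List.mem_cons_self)
    have hswM : ∀ t' ∈ M, t'.IsSwap := fun t' ht' => hsw t' (List.mem_cons_of_mem _ ht')
    obtain ⟨hforM, hedge⟩ := hfor
    have hMuv : ¬ SOL M u v := hedge u v huv rfl
    obtain ⟨A_M, B_M, C_M⟩ := ih hswM hforM
    set π := M.prod with hπ
    have hnsc : ¬ π.SameCycle u v := fun hsc => hMuv ((B_M u v).mpr hsc)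
    have hprod : (Equiv.swap u v :: M).prod = Equiv.swap u v * π := by
      rw [List.prod_cons]
    have glue : ∀ z w, SOL (Equiv.swap u v :: M) z w ↔
        SOL M z w ∨ (SOL M z u ∧ SOL M v w) ∨ (SOL M z v ∧ SOL M u w) :=
      fun z w => sol_cons_swap_iff hswM z w
    refine ⟨?_, ?_, ?_⟩
    · intro x
      rw [hprod, join_fixed_iff hnsc x, List.forall_mem_cons, ← A_M x, swap_fix_iff huv]
      tauto
    · intro x y
      rw [hprod, glue x y, join_sameCycle_iff hnsc x y]
      simp only [B_M]
    · -- cardinality clause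
      intro x
      by_cases hxu : SOL M x u
      · exact tg3_case hswM C_M huv hMuv hxu
      by_cases hxv : SOL M x v
      · have h1 := tg3_case hswM C_M huv.symm (fun h => hMuv (sos_symm h)) hxv
        rw [Equiv.swap_comm] at h1
        exact h1
      · -- orbit of x doesn't meet u,v
        have hiff : ∀ z, SOL (Equiv.swap u v :: M) x z ↔ SOL M x z := by
          intro z
          rw [glue x z]
          constructor
          · rintro (h | ⟨h1, _⟩ | ⟨h1, _⟩)
            · exact h
            · exact absurd h1 hxu
            · exact absurd h1 hxv
          · exact Or.inl
        have hset : {z | SOL (Equiv.swap u v :: M) x z} = {z | SOL M x z} := by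
          ext z; simp [hiff]
        have hterm' : ¬ ∃ z, Equiv.swap u v z ≠ z ∧ SOL (Equiv.swap u v :: M) x z := by
          rintro ⟨z, h1, h2⟩
          rw [hiff z] at h2
          by_cases hzu : z = u
          · subst hzu; exact hxu h2
          by_cases hzv : z = v
          · subst hzv; exact hxv h2
          · exact h1 (Equiv.swap_apply_of_ne_of_ne hzu hzv)
        rw [hset, countMeets_cons, if_neg hterm', countMeets_congr (fun z => hiff z) M, C_M]

end Forest

section Extract

open BMAux Equiv

variable {d : ℕ}

lemma swap_eq_cases {u v a b : Fin d} (huv : u ≠ v) (hab : a ≠ b)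
    (h : Equiv.swap u v = Equiv.swap a b) : (a = u ∧ b = v) ∨ (a = v ∧ b = u) := by
  have h1 : Equiv.swap u v a = b := by rw [h, Equiv.swap_apply_left]
  by_cases hau : a = u
  · subst hau
    rw [Equiv.swap_apply_left] at h1
    exact Or.inl ⟨rfl, h1.symm⟩
  by_cases hav : a = v
  · subst hav
    rw [Equiv.swap_apply_right] at h1
    exact Or.inr ⟨rfl, h1.symm⟩
  · rw [Equiv.swap_apply_of_ne_of_ne hau hav] at h1
    exact absurd h1 hab

lemma rforest_cons {M : List (Equiv.Perm (Fin d))} (hforM : RForest M) {x y : Fin d}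
    (hxy : x ≠ y) (hMxy : ¬ SOL M x y) : RForest (Equiv.swap x y :: M) := by
  refine ⟨hforM, fun a b hab heq => ?_⟩
  rcases swap_eq_cases hxy hab heq with ⟨rfl, rfl⟩ | ⟨rfl, rfl⟩
  · exact hMxy
  · exact fun h => hMxy (sos_symm h)

lemma rforest_cons_elim {M : List (Equiv.Perm (Fin d))} {x y : Fin d}
    (h : RForest (Equiv.swap x y :: M)) (hxy : x ≠ y) : RForest M ∧ ¬ SOL M x y :=
  ⟨h.1, h.2 x y hxy rfl⟩

lemma swaps_cons {M : List (Equiv.Perm (Fin d))} {a b : Fin d} (hab : a ≠ b)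
    (h : ∀ t ∈ M, Equiv.Perm.IsSwap t) : ∀ t ∈ Equiv.swap a b :: M, Equiv.Perm.IsSwap t := by
  intro t ht
  rcases List.mem_cons.mp ht with rfl | ht'
  · exact ⟨a, b, hab, rfl⟩
  · exact h t ht'

/-- the inductive step helper for `extract_edge`, case `x ~ u`, `v ~ y`. -/
lemma extract_aux (n : ℕ)
    (ihn : ∀ R : List (Equiv.Perm (Fin d)), R.length ≤ n → (∀ t ∈ R, Equiv.Perm.IsSwap t) →
      RForest R → ∀ x y : Fin d, x ≠ y → SOL R x y →
      ∃ R'', BraidEquiv R (Equiv.swap x y :: R'') ∧ RForest (Equiv.swap x y :: R''))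
    (M : List (Equiv.Perm (Fin d))) (hlenM : M.length ≤ n)
    (hswM : ∀ t ∈ M, Equiv.Perm.IsSwap t) (hforM : RForest M)
    (u v x y : Fin d) (huv : u ≠ v) (hxy : x ≠ y) (hMuv : ¬ SOL M u v)
    (hxyM : ¬ SOL M x y) (hxu : SOL M x u) (hvy : SOL M v y) :
    ∃ R'', BraidEquiv (Equiv.swap u v :: M) (Equiv.swap x y :: R'') ∧
      RForest (Equiv.swap x y :: R'') := by
  have hxv : x ≠ v := by
    rintro rfl
    exact hMuv (sos_symm hxu)
  have hyu : y ≠ u := by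
    rintro rfl
    exact hMuv (sos_symm hvy)
  have hyuM : ¬ SOL M y u := fun h => hMuv (sos_trans (sos_symm h) (sos_symm hvy))
  by_cases hx : x = u
  · subst hx
    by_cases hy : y = v
    · subst hy
      exact ⟨M, be_refl _, rforest_cons hforM hxy hxyM⟩
    · have hvy' : v ≠ y := fun h => hy h.symm
      obtain ⟨M₁, hbe1, hf1⟩ := ihn M hlenM hswM hforM v y hvy' hvy
      obtain ⟨hforM₁, hM₁vy⟩ := rforest_cons_elim hf1 hvy'
      have hswM₁ : ∀ t ∈ M₁, Equiv.Perm.IsSwap t := by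
        intro t ht
        exact be_swaps hbe1 hswM t (List.mem_cons_of_mem _ ht)
      have trans1 : ∀ a b : Fin d, SOL M₁ a b → SOL M a b := fun a b h =>
        (sol_braid hbe1 a b).mpr (sol_mono_cons _ h)
      have hM₁uv : ¬ SOL M₁ x v := fun h => hMuv (trans1 _ _ h)
      have c0 : BraidEquiv (Equiv.swap x v :: M) (Equiv.swap x v :: Equiv.swap v y :: M₁) :=
        be_cons _ hbe1
      have estep := be_step_front (Equiv.swap x v) (Equiv.swap v y) M₁
      rw [show Equiv.swap x v * Equiv.swap v y * (Equiv.swap x v)⁻¹ = Equiv.swap x y by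
        rw [conj_swap, Equiv.swap_apply_right, Equiv.swap_apply_of_ne_of_ne hyu hy]] at estep
      refine ⟨Equiv.swap x v :: M₁, be_trans c0 estep, ?_⟩
      apply rforest_cons (rforest_cons hforM₁ huv hM₁uv) hxy
      intro hc
      rcases (sol_cons_swap_iff hswM₁ x y).mp hc with h | ⟨h1, h2⟩ | ⟨h1, h2⟩
      · exact hyuM (sos_symm (trans1 _ _ h))
      · exact hM₁vy h2
      · exact hM₁uv h1
  · by_cases hy : y = v
    · subst hy
      obtain ⟨M₁, hbe1, hf1⟩ := ihn M hlenM hswM hforM x u hx hxu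
      obtain ⟨hforM₁, hM₁xu⟩ := rforest_cons_elim hf1 hx
      have hswM₁ : ∀ t ∈ M₁, Equiv.Perm.IsSwap t := by
        intro t ht
        exact be_swaps hbe1 hswM t (List.mem_cons_of_mem _ ht)
      have trans1 : ∀ a b : Fin d, SOL M₁ a b → SOL M a b := fun a b h =>
        (sol_braid hbe1 a b).mpr (sol_mono_cons _ h)
      have hM₁uv : ¬ SOL M₁ u y := fun h => hMuv (trans1 _ _ h)
      have c0 : BraidEquiv (Equiv.swap u y :: M) (Equiv.swap u y :: Equiv.swap x u :: M₁) :=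
        be_cons _ hbe1
      have estep := be_step_front (Equiv.swap u y) (Equiv.swap x u) M₁
      rw [show Equiv.swap u y * Equiv.swap x u * (Equiv.swap u y)⁻¹ = Equiv.swap x y by
        rw [conj_swap, Equiv.swap_apply_left, Equiv.swap_apply_of_ne_of_ne hx hxv]] at estep
      refine ⟨Equiv.swap u y :: M₁, be_trans c0 estep, ?_⟩
      apply rforest_cons (rforest_cons hforM₁ huv hM₁uv) hxy
      intro hc
      rcases (sol_cons_swap_iff hswM₁ x y).mp hc with h | ⟨h1, h2⟩ | ⟨h1, h2⟩
      · exact hMuv (sos_trans (sos_symm hxu) (trans1 _ _ h))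
      · exact hM₁xu h1
      · exact hMuv (sos_trans (sos_symm hxu) (trans1 _ _ h1))
    · -- fully generic case
      obtain ⟨M₁, hbe1, hf1⟩ := ihn M hlenM hswM hforM x u hx hxu
      obtain ⟨hforM₁, hM₁xu⟩ := rforest_cons_elim hf1 hx
      have hswM₁ : ∀ t ∈ M₁, Equiv.Perm.IsSwap t := by
        intro t ht
        exact be_swaps hbe1 hswM t (List.mem_cons_of_mem _ ht)
      have trans1 : ∀ a b : Fin d, SOL M₁ a b → SOL M a b := fun a b h =>
        (sol_braid hbe1 a b).mpr (sol_mono_cons _ h)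
      have hyv : y ≠ v := hy
      have hM₁yv : SOL M₁ y v := by
        have hMyv : SOL M y v := sos_symm hvy
        have := (sol_braid hbe1 y v).mp hMyv
        rcases (sol_cons_swap_iff hswM₁ y v).mp this with h | ⟨h1, h2⟩ | ⟨h1, h2⟩
        · exact h
        · exact absurd (trans1 _ _ h2) hMuv
        · exact absurd (trans1 _ _ h1) hyuM
      have hlen1 : M₁.length ≤ n := by
        have := be_length hbe1
        simp only [List.length_cons] at this
        omega
      obtain ⟨M₂, hbe2, hf2⟩ := ihn M₁ hlen1 hswM₁ hforM₁ y v hyv hM₁yv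
      obtain ⟨hforM₂, hM₂yv⟩ := rforest_cons_elim hf2 hyv
      have hswM₂ : ∀ t ∈ M₂, Equiv.Perm.IsSwap t := by
        intro t ht
        exact be_swaps hbe2 hswM₁ t (List.mem_cons_of_mem _ ht)
      have trans2 : ∀ a b : Fin d, SOL M₂ a b → SOL M₁ a b := fun a b h =>
        (sol_braid hbe2 a b).mpr (sol_mono_cons _ h)
      have transM : ∀ a b : Fin d, SOL M₂ a b → SOL M a b := fun a b h =>
        trans1 _ _ (trans2 _ _ h)
      -- the chain of five braid moves
      have c0 : BraidEquiv (Equiv.swap u v :: M)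
          (Equiv.swap u v :: Equiv.swap x u :: Equiv.swap y v :: M₂) :=
        be_cons _ (be_trans hbe1 (be_cons _ hbe2))
      have e1 := be_step_front (Equiv.swap u v) (Equiv.swap x u) (Equiv.swap y v :: M₂)
      rw [show Equiv.swap u v * Equiv.swap x u * (Equiv.swap u v)⁻¹ = Equiv.swap x v by
        rw [conj_swap, Equiv.swap_apply_left, Equiv.swap_apply_of_ne_of_ne hx hxv]] at e1
      have e2 := be_step_front1 (Equiv.swap x v) (Equiv.swap u v) (Equiv.swap y v) M₂
      rw [show Equiv.swap u v * Equiv.swap y v * (Equiv.swap u v)⁻¹ = Equiv.swap y u by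
        rw [conj_swap, Equiv.swap_apply_right, Equiv.swap_apply_of_ne_of_ne hyu hyv]] at e2
      have e3 := be_step_front (Equiv.swap x v) (Equiv.swap y u) (Equiv.swap u v :: M₂)
      rw [show Equiv.swap x v * Equiv.swap y u * (Equiv.swap x v)⁻¹ = Equiv.swap y u by
        rw [conj_swap, Equiv.swap_apply_of_ne_of_ne (Ne.symm hxy) hyv,
          Equiv.swap_apply_of_ne_of_ne (Ne.symm hx) huv]] at e3
      have e4 := be_step_front1 (Equiv.swap y u) (Equiv.swap x v) (Equiv.swap u v) M₂
      rw [show Equiv.swap x v * Equiv.swap u v * (Equiv.swap x v)⁻¹ = Equiv.swap u x by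
        rw [conj_swap, Equiv.swap_apply_of_ne_of_ne (Ne.symm hx) huv,
          Equiv.swap_apply_right]] at e4
      have e5 := be_step_front (Equiv.swap y u) (Equiv.swap u x) (Equiv.swap x v :: M₂)
      rw [show Equiv.swap y u * Equiv.swap u x * (Equiv.swap y u)⁻¹ = Equiv.swap x y by
        rw [conj_swap, Equiv.swap_apply_right, Equiv.swap_apply_of_ne_of_ne hxy hx,
          Equiv.swap_comm]] at e5
      have chain : BraidEquiv (Equiv.swap u v :: M)
          (Equiv.swap x y :: Equiv.swap y u :: Equiv.swap x v :: M₂) :=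
        be_trans c0 (be_trans e1 (be_trans e2 (be_trans e3 (be_trans e4 e5))))
      -- forest structure of the result
      have hM₂uv : ¬ SOL M₂ u v := fun h => hMuv (transM _ _ h)
      have hM₂xv : ¬ SOL M₂ x v := fun h =>
        hMuv (sos_trans (sos_symm hxu) (transM _ _ h))
      have hM₂xu : ¬ SOL M₂ x u := fun h => hM₁xu (trans2 _ _ h)
      have lvl1 : RForest (Equiv.swap x v :: M₂) := rforest_cons hforM₂ hxv hM₂xv
      have hyu' : ¬ SOL (Equiv.swap x v :: M₂) y u := by
        intro hc
        rcases (sol_cons_swap_iff hswM₂ y u).mp hc with h | ⟨h1, h2⟩ | ⟨h1, h2⟩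
        · exact hyuM (transM _ _ h)
        · exact hMuv (sos_symm (transM _ _ h2))
        · exact hM₂yv h1
      have lvl2 : RForest (Equiv.swap y u :: Equiv.swap x v :: M₂) :=
        rforest_cons lvl1 hyu hyu'
      have hxu' : ¬ SOL (Equiv.swap x v :: M₂) x u := by
        intro hc
        rcases (sol_cons_swap_iff hswM₂ x u).mp hc with h | ⟨h1, h2⟩ | ⟨h1, h2⟩
        · exact hM₂xu h
        · exact hMuv (sos_symm (transM _ _ h2))
        · exact hM₂xv h1
      have hxy' : ¬ SOL (Equiv.swap x v :: M₂) x y := by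
        intro hc
        rcases (sol_cons_swap_iff hswM₂ x y).mp hc with h | ⟨h1, h2⟩ | ⟨h1, h2⟩
        · exact hxyM (transM _ _ h)
        · exact hM₂yv (sos_symm h2)
        · exact hM₂xv h1
      have hswXV : ∀ t ∈ Equiv.swap x v :: M₂, Equiv.Perm.IsSwap t := swaps_cons hxv hswM₂
      have hfin : ¬ SOL (Equiv.swap y u :: Equiv.swap x v :: M₂) x y := by
        intro hc
        rcases (sol_cons_swap_iff hswXV x y).mp hc with h | ⟨h1, h2⟩ | ⟨h1, h2⟩
        · exact hxy' h
        · exact hxy' h1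
        · exact hxu' h1
      exact ⟨Equiv.swap y u :: Equiv.swap x v :: M₂, chain, rforest_cons lvl2 hxy hfin⟩

lemma extract_edge : ∀ (n : ℕ) (R : List (Equiv.Perm (Fin d))), R.length ≤ n →
    (∀ t ∈ R, Equiv.Perm.IsSwap t) → RForest R → ∀ x y : Fin d, x ≠ y → SOL R x y →
    ∃ R'', BraidEquiv R (Equiv.swap x y :: R'') ∧ RForest (Equiv.swap x y :: R'') := by
  intro n
  induction n with
  | zero =>
    intro R hlen _ _ x y hxy hso
    have hR : R = [] := List.eq_nil_of_length_eq_zero (Nat.le_zero.mp hlen)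
    subst hR
    exact absurd (sol_nil.mp hso) hxy
  | succ n ihn =>
    intro R hlen hsw hfor x y hxy hso
    match R, hlen, hsw, hfor, hso with
    | [], _, _, _, hso => exact absurd (sol_nil.mp hso) hxy
    | t :: M, hlen, hsw, hfor, hso =>
      obtain ⟨u, v, huv, rfl⟩ := hsw t (List.mem_cons_self)
      have hswM : ∀ t' ∈ M, Equiv.Perm.IsSwap t' :=
        fun t' ht' => hsw t' (List.mem_cons_of_mem _ ht')
      obtain ⟨hforM, hMuv⟩ := rforest_cons_elim hfor huv
      have hlenM : M.length ≤ n := by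
        simp only [List.length_cons] at hlen
        omega
      by_cases hxyM : SOL M x y
      · -- case (i): x ~ y already inside M
        obtain ⟨M', hbe1, hf1⟩ := ihn M hlenM hswM hforM x y hxy hxyM
        obtain ⟨hforM', hM'xy⟩ := rforest_cons_elim hf1 hxy
        have hswM' : ∀ t' ∈ M', Equiv.Perm.IsSwap t' := by
          intro t' ht'
          exact be_swaps hbe1 hswM t' (List.mem_cons_of_mem _ ht')
        have trans1 : ∀ a b : Fin d, SOL M' a b → SOL M a b := fun a b h =>
          (sol_braid hbe1 a b).mpr (sol_mono_cons _ h)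
        set u' := Equiv.swap x y u with hu'
        set v' := Equiv.swap x y v with hv'
        have hu'v' : u' ≠ v' := fun h => huv (by
          have := congrArg (Equiv.swap x y) h
          rwa [hu', hv', Equiv.swap_apply_self, Equiv.swap_apply_self] at this)
        -- braid: swap u v :: swap x y :: M' ≈ swap x y :: swap u' v' :: M'
        have c0 : BraidEquiv (Equiv.swap u v :: M) (Equiv.swap u v :: Equiv.swap x y :: M') :=
          be_cons _ hbe1
        have estep := be_step_front (Equiv.swap x y) (Equiv.swap u' v') M'
        rw [show Equiv.swap x y * Equiv.swap u' v' * (Equiv.swap x y)⁻¹ = Equiv.swap u v by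
          rw [conj_swap, hu', hv', Equiv.swap_apply_self, Equiv.swap_apply_self]] at estep
        have chain := be_trans c0 (be_symm estep)
        -- orbit relations
        have hrel : ∀ a : Fin d, SOL M (Equiv.swap x y a) a := by
          intro a
          by_cases hax : a = x
          · subst hax; rw [Equiv.swap_apply_left]; exact sos_symm hxyM
          by_cases hay : a = y
          · subst hay; rw [Equiv.swap_apply_right]; exact hxyM
          · rw [Equiv.swap_apply_of_ne_of_ne hax hay]; exact sos_refl _ _
        have hM'u'v' : ¬ SOL M' u' v' := by
          intro hc
          exact hMuv (sos_trans (sos_symm (hrel u)) (sos_trans (trans1 _ _ hc) (hrel v)))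
        have hfin : ¬ SOL (Equiv.swap u' v' :: M') x y := by
          intro hc
          rcases (sol_cons_swap_iff hswM' x y).mp hc with h | ⟨h1, h2⟩ | ⟨h1, h2⟩
          · exact hM'xy h
          · exact hMuv (sos_trans (sos_symm (hrel u)) (sos_trans (sos_symm (trans1 _ _ h1))
              (sos_trans hxyM (sos_trans (sos_symm (trans1 _ _ h2)) (hrel v)))))
          · exact hMuv (sos_trans (sos_symm (hrel u)) (sos_trans (trans1 _ _ h2)
              (sos_trans (sos_symm hxyM) (sos_trans (trans1 _ _ h1) (hrel v)))))
        exact ⟨Equiv.swap u' v' :: M', chain,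
          rforest_cons (rforest_cons hforM' hu'v' hM'u'v') hxy hfin⟩
      · -- case (ii): the edge u,v is needed to connect x to y
        rcases (sol_cons_swap_iff hswM x y).mp hso with h | ⟨h1, h2⟩ | ⟨h1, h2⟩
        · exact absurd h hxyM
        · exact extract_aux n ihn M hlenM hswM hforM u v x y huv hxy hMuv hxyM h1 h2
        · have h' := extract_aux n ihn M hlenM hswM hforM v u x y (Ne.symm huv) hxy
            (fun hc => hMuv (sos_symm hc)) hxyM h1 h2
          rwa [Equiv.swap_comm v u] at h'

lemma nonforest_pair : ∀ (L : List (Equiv.Perm (Fin d))), (∀ t ∈ L, Equiv.Perm.IsSwap t) →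
    ¬ RForest L → ∃ (P Q : List (Equiv.Perm (Fin d))) (s : Equiv.Perm (Fin d)),
      Equiv.Perm.IsSwap s ∧ BraidEquiv L (P ++ s :: s :: Q) := by
  intro L
  induction L with
  | nil => intro _ h; exact absurd trivial h
  | cons t M ih =>
    intro hsw hnf
    obtain ⟨u, v, huv, rfl⟩ := hsw t (List.mem_cons_self)
    have hswM : ∀ t' ∈ M, Equiv.Perm.IsSwap t' :=
      fun t' ht' => hsw t' (List.mem_cons_of_mem _ ht')
    by_cases hforM : RForest M
    · have hedge : ∃ a b : Fin d, a ≠ b ∧ Equiv.swap u v = Equiv.swap a b ∧ SOL M a b := by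
        by_contra hc
        push_neg at hc
        exact hnf ⟨hforM, fun a b hab heq => hc a b hab heq⟩
      obtain ⟨a, b, hab, heq, hso⟩ := hedge
      obtain ⟨M'', hbe, _⟩ := extract_edge M.length M le_rfl hswM hforM a b hab hso
      refine ⟨[], M'', Equiv.swap a b, ⟨a, b, hab, rfl⟩, ?_⟩
      have hc : BraidEquiv (Equiv.swap u v :: M) (Equiv.swap u v :: Equiv.swap a b :: M'') :=
        be_cons _ hbe
      rw [heq] at hc ⊢
      simpa using hc
    · obtain ⟨P, Q, s, hs, hbe⟩ := ih hswM hforM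
      exact ⟨Equiv.swap u v :: P, Q, s, hs, be_cons _ hbe⟩

end Extract

section Main

open BMAux Equiv

variable {d : ℕ}

lemma countMeets_all {P : Fin d → Prop} {L : List (Equiv.Perm (Fin d))}
    (h : ∀ t ∈ L, ∃ z, t z ≠ z ∧ P z) : countMeets P L = L.length := by
  induction L with
  | nil => simp
  | cons t M ih =>
    rw [countMeets_cons, if_pos (h t (List.mem_cons_self)),
      ih (fun t' ht' => h t' (List.mem_cons_of_mem _ ht'))]
    simp

end Main

/-- Lemma: if the group generated by a sequence of transpositions has a unique nontrivial
orbit `Σ` and the sequence is not minimal (its product is not a cycle of order `n+1`),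
then for every `a ∈ Σ` the sequence is braid-equivalent to one ending in `(ab),(ab)`
for some `b ∈ Σ`, `b ≠ a`. -/
theorem nonminimal_braidEquiv_end_pair {d : ℕ} (L : List (Equiv.Perm (Fin d)))
    (hL : ∀ t ∈ L, t.IsSwap)
    (H : Subgroup (Equiv.Perm (Fin d)))
    (hH : H = Subgroup.closure {x : Equiv.Perm (Fin d) | x ∈ L})
    (Sg : Set (Fin d)) (hnt : Sg.Nontrivial)
    (horb : ∀ x ∈ Sg, ∀ y ∈ Sg, SameOrbit H x y)
    (hcl : ∀ x ∈ Sg, ∀ σ ∈ H, σ x ∈ Sg)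
    (hfix : ∀ x : Fin d, x ∉ Sg → ∀ σ ∈ H, σ x = x)
    (hnonmin : ¬ (L.prod.IsCycle ∧ L.prod.support.card = L.length + 1)) :
    ∀ a ∈ Sg, ∃ b ∈ Sg, b ≠ a ∧
      ∃ L₀ : List (Equiv.Perm (Fin d)),
        BraidEquiv L (L₀ ++ [Equiv.swap a b, Equiv.swap a b]) := by
  intro a ha
  have hsol_orb : ∀ x y : Fin d, BMAux.SOL L x y ↔ SameOrbit H x y := by
    intro x y
    rw [hH]
    exact Iff.rfl
  -- Step 1: L is not a forest
  have hnf : ¬ RForest L := by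
    intro hfor
    obtain ⟨A, B, C⟩ := treegen L hL hfor
    apply hnonmin
    obtain ⟨p, hp, q, hq, hpq⟩ := hnt
    have hmoved : ∀ x ∈ Sg, ∃ t ∈ L, t x ≠ x := by
      intro x hx
      by_contra hc
      push_neg at hc
      have hinv : ∀ g ∈ {t : Equiv.Perm (Fin d) | t ∈ L}, g⁻¹ = g := by
        intro g hg
        obtain ⟨a', b', hab', rfl⟩ := hL g hg
        exact Equiv.swap_inv _ _
      have hstep : ∀ g ∈ {t : Equiv.Perm (Fin d) | t ∈ L},
          ∀ z ∈ ({x} : Set (Fin d)), g z ∈ ({x} : Set (Fin d)) := by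
        intro g hg z hz
        rw [Set.mem_singleton_iff] at hz
        subst hz
        exact Set.mem_singleton_iff.mpr (hc g hg)
      have hfixx : ∀ σ ∈ H, σ x = x := by
        intro σ hσ
        rw [hH] at hσ
        exact BMAux.closure_invariant hinv hstep σ hσ x rfl
      rcases eq_or_ne x p with rfl | hxp
      · obtain ⟨σ, hσ, hval⟩ := horb x hx q hq
        exact hpq (by rw [← hval, hfixx σ hσ])
      · obtain ⟨σ, hσ, hval⟩ := horb x hx p hp
        exact hxp (by rw [← hval, hfixx σ hσ])
    have hprodH : L.prod ∈ H := by
      rw [hH]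
      exact list_prod_mem (fun t ht => Subgroup.subset_closure ht)
    have hsupport : ∀ x : Fin d, L.prod x ≠ x ↔ x ∈ Sg := by
      intro x
      constructor
      · intro hx
        by_contra hxs
        exact hx (hfix x hxs L.prod hprodH)
      · intro hx hfx
        rw [A x] at hfx
        obtain ⟨t, htL, hmov⟩ := hmoved x hx
        exact hmov (hfx t htL)
    have hamoved : L.prod a ≠ a := (hsupport a).mpr ha
    constructor
    · refine ⟨a, hamoved, ?_⟩
      intro y hy
      have hySg : y ∈ Sg := (hsupport y).mp hy
      have hso : BMAux.SOL L a y := (hsol_orb a y).mpr (horb a ha y hySg)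
      exact (B a y).mp hso
    · have hSgset : {z | BMAux.SOL L a z} = Sg := by
        ext z
        constructor
        · intro hz
          rw [Set.mem_setOf_eq, hsol_orb] at hz
          obtain ⟨σ, hσ, hval⟩ := hz
          exact hval ▸ hcl a ha σ hσ
        · intro hz
          rw [Set.mem_setOf_eq, hsol_orb]
          exact horb a ha z hz
      have h1 : (L.prod.support : Set (Fin d)) = Sg := by
        ext z
        simp only [Finset.coe_filter, Set.mem_setOf_eq, Finset.mem_coe,
          Equiv.Perm.mem_support]
        exact hsupport z
      have h2 : L.prod.support.card = Sg.ncard := by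
        rw [← h1, Set.ncard_coe_finset]
      have h3 : countMeets (BMAux.SOL L a) L = L.length := by
        apply countMeets_all
        intro t ht
        obtain ⟨c, e, hce, rfl⟩ := hL t ht
        have hcS : c ∈ Sg := by
          by_contra hcs
          have hfc := hfix c hcs (Equiv.swap c e)
            (by rw [hH]; exact Subgroup.subset_closure ht)
          rw [Equiv.swap_apply_left] at hfc
          exact hce hfc.symm
        refine ⟨c, ?_, (hsol_orb a c).mpr (horb a ha c hcS)⟩
        rw [Equiv.swap_apply_left]
        exact fun h => hce h.symm
      rw [h2, ← hSgset, C a, h3]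
  -- Step 2: extract an adjacent equal pair and move it to the end
  obtain ⟨P, Q, s, hsw, hbe⟩ := nonforest_pair L hL hnf
  obtain ⟨x, y, hxy, rfl⟩ := hsw
  have hmove0 := be_append_left P (be_pair_move_right (Equiv.swap_mul_self x y) Q)
  rw [← List.append_assoc] at hmove0
  have hbe2 : BraidEquiv L ((P ++ Q) ++ [Equiv.swap x y, Equiv.swap x y]) :=
    be_trans hbe hmove0
  set D := P ++ Q with hD
  have hDswaps : ∀ t ∈ D ++ [Equiv.swap x y, Equiv.swap x y], Equiv.Perm.IsSwap t :=
    be_swaps hbe2 hL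
  have hDsw : ∀ t ∈ D, Equiv.Perm.IsSwap t :=
    fun t ht => hDswaps t (List.mem_append_left _ ht)
  have hDinv : ∀ g ∈ {t : Equiv.Perm (Fin d) | t ∈ D}, g⁻¹ = g := by
    intro g hg
    obtain ⟨a', b', _, rfl⟩ := hDsw g hg
    exact Equiv.swap_inv _ _
  have hsetD : {t : Equiv.Perm (Fin d) | t ∈ D ++ [Equiv.swap x y, Equiv.swap x y]}
      = insert (Equiv.swap x y) {t : Equiv.Perm (Fin d) | t ∈ D} := by
    ext g
    simp only [Set.mem_setOf_eq, List.mem_append, List.mem_cons, List.not_mem_nil,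
      or_false, Set.mem_insert_iff]
    tauto
  have hclosure : Subgroup.closure {t : Equiv.Perm (Fin d) | t ∈ L}
      = Subgroup.closure (insert (Equiv.swap x y) {t : Equiv.Perm (Fin d) | t ∈ D}) := by
    rw [be_closure hbe2, hsetD]
  have hsmem : Equiv.swap x y ∈ H := by
    rw [hH, hclosure]
    exact Subgroup.subset_closure (Set.mem_insert _ _)
  have hxS : x ∈ Sg := by
    by_contra hxs
    have h := hfix x hxs _ hsmem
    rw [Equiv.swap_apply_left] at h
    exact hxy h.symm
  have hyS : y ∈ Sg := by
    by_contra hys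
    have h := hfix y hys _ hsmem
    rw [Equiv.swap_apply_right] at h
    exact hxy h
  have hxa : SameOrbit (Subgroup.closure
      (insert (Equiv.swap x y) {t : Equiv.Perm (Fin d) | t ∈ D})) x a := by
    rw [← hclosure, ← hH]
    exact horb x hxS a ha
  have hcases : BMAux.SOS {t : Equiv.Perm (Fin d) | t ∈ D} x a ∨
      BMAux.SOS {t : Equiv.Perm (Fin d) | t ∈ D} y a := by
    rcases (BMAux.sos_insert_swap_iff hDinv x a).mp hxa with h | ⟨_, h2⟩ | ⟨_, h2⟩
    · exact Or.inl h
    · exact Or.inr h2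
    · exact Or.inl h2
  have hKH : Subgroup.closure {t : Equiv.Perm (Fin d) | t ∈ D} ≤ H := by
    rw [hH, hclosure]
    exact Subgroup.closure_mono (Set.subset_insert _ _)
  rcases hcases with h | h
  · obtain ⟨σ, hσ, hσx⟩ := h
    refine ⟨σ y, hcl y hyS σ (hKH hσ), ?_, D, ?_⟩
    · intro heq
      exact hxy (σ.injective (hσx.trans heq.symm))
    · have hconj := be_pair_conj D σ hσ (Equiv.swap x y) (Equiv.swap_mul_self x y)
      rw [conj_swap, hσx] at hconj
      exact be_trans hbe2 hconj
  · obtain ⟨σ, hσ, hσy⟩ := h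
    refine ⟨σ x, hcl x hxS σ (hKH hσ), ?_, D, ?_⟩
    · intro heq
      exact hxy (σ.injective (hσy.trans heq.symm)).symm
    · have hconj := be_pair_conj D σ hσ (Equiv.swap x y) (Equiv.swap_mul_self x y)
      rw [conj_swap, hσy, Equiv.swap_comm (σ x) a] at hconj
      exact be_trans hbe2 hconj
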